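/- arXiv:2001.05571 — 5 statements merged into one kernel-verified Lean document; each statement's English description precedes it below -/
import Mathlib

section
/- Let t̂, f̂, σ_t, σ_f be real numbers with 0 < σ_t < t̂ and 0 < σ_f < f̂. Define Δ = sup_{η ∈ (0,1)} (UB(η) − LB(η)), where UB(η) and LB(η) are the supremum and infimum of Prec(η, t, f) over t ∈ (t̂ − σ_t, t̂ + σ_t) and f ∈ (f̂ − σ_f, f̂ + σ_f). Then Δ ≤ max{σ_t/t̂, σ_f/f̂}. -/
open Set

/-- Precision as a function of positive class prevalence `η`, TPR `t` and FPR `f`. -/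
noncomputable def Prec (η t f : ℝ) : ℝ := η * t / (η * t + (1 - η) * f)

/-- Upper bound `UB(η)`: supremum of precision over the confidence intervals. -/
noncomputable def UB (th σt fh σf η : ℝ) : ℝ :=
  sSup {p : ℝ | ∃ t ∈ Ioo (th - σt) (th + σt), ∃ f ∈ Ioo (fh - σf) (fh + σf), p = Prec η t f}

/-- Lower bound `LB(η)`: infimum of precision over the confidence intervals. -/
noncomputable def LB (th σt fh σf η : ℝ) : ℝ :=
  sInf {p : ℝ | ∃ t ∈ Ioo (th - σt) (th + σt), ∃ f ∈ Ioo (fh - σf) (fh + σf), p = Prec η t f}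

/-- The maximal uncertainty `Δ = sup_{η ∈ (0,1)} (UB(η) - LB(η))`. -/
noncomputable def Delta (th σt fh σf : ℝ) : ℝ :=
  sSup {d : ℝ | ∃ η ∈ Ioo (0:ℝ) 1, d = UB th σt fh σf η - LB th σt fh σf η}

/-!
Precision is increasing in the TPR and decreasing in the FPR, so with `c` the larger coefficient
of variation, `UB(η) - LB(η)` is at most the precision spread between the corners
`(t̂(1+c), f̂(1-c))` and `(t̂(1-c), f̂(1+c))`. Writing `a = η t̂` and `b = (1-η) f̂`, that spread
is `4abc / ((a+b)² - c²(a-b)²) ≤ 4abc / (4ab) = c`.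
-/

lemma Prec_le_Prec {η : ℝ} (hη : η ∈ Ioo 0 1) {t₁ t₂ f₁ f₂ : ℝ} (ht₁ : 0 < t₁) (ht : t₁ ≤ t₂)
    (hf₂ : 0 < f₂) (hf : f₂ ≤ f₁) : Prec η t₁ f₁ ≤ Prec η t₂ f₂ := by
  obtain ⟨hη₀, hη₁⟩ := hη
  have h1η : 0 < 1 - η := sub_pos.2 hη₁
  have hD₁ : 0 < η * t₁ + (1 - η) * f₁ := by nlinarith
  have hD₂ : 0 < η * t₂ + (1 - η) * f₂ := by nlinarith
  have hcross : t₁ * f₂ ≤ t₂ * f₁ := mul_le_mul ht hf hf₂.le (ht₁.trans_le ht).le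
  unfold Prec
  rw [div_le_div_iff₀ hD₁ hD₂]
  nlinarith [mul_le_mul_of_nonneg_left hcross (mul_pos hη₀ h1η).le]

lemma Prec_one_add_sub_Prec_one_sub_le {η : ℝ} (hη : η ∈ Ioo 0 1) {t f c : ℝ} (ht : 0 < t)
    (hf : 0 < f) (hc₀ : 0 ≤ c) (hc₁ : c ≤ 1) :
    Prec η (t * (1 + c)) (f * (1 - c)) - Prec η (t * (1 - c)) (f * (1 + c)) ≤ c := by
  have ha : 0 < η * t := mul_pos hη.1 ht
  have hb : 0 < (1 - η) * f := mul_pos (sub_pos.2 hη.2) hf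
  have hD₁ : 0 < η * (t * (1 + c)) + (1 - η) * (f * (1 - c)) := by nlinarith
  have hD₂ : 0 < η * (t * (1 - c)) + (1 - η) * (f * (1 + c)) := by nlinarith
  unfold Prec
  rw [div_sub_div _ _ hD₁.ne' hD₂.ne', div_le_iff₀ (mul_pos hD₁ hD₂)]
  -- with `a = ηt`, `b = (1-η)f` the two sides differ by `c (1 - c²) (a - b)²`
  nlinarith [mul_nonneg (mul_nonneg hc₀ (by nlinarith : (0 : ℝ) ≤ 1 - c ^ 2))
    (sq_nonneg (η * t - (1 - η) * f))]

lemma UB_sub_LB_le {th σt fh σf η c : ℝ} (hη : η ∈ Ioo 0 1) (hth : 0 < th) (hfh : 0 < fh)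
    (hσt : 0 < σt) (hσf : 0 < σf) (hc : c < 1) (hσtc : σt ≤ c * th) (hσfc : σf ≤ c * fh) :
    UB th σt fh σf η - LB th σt fh σf η ≤ c := by
  have hc₀ : 0 ≤ c := by nlinarith
  have hne : {p : ℝ | ∃ t ∈ Ioo (th - σt) (th + σt), ∃ f ∈ Ioo (fh - σf) (fh + σf),
      p = Prec η t f}.Nonempty :=
    ⟨_, th, ⟨by linarith, by linarith⟩, fh, ⟨by linarith, by linarith⟩, rfl⟩
  have hUB : UB th σt fh σf η ≤ Prec η (th * (1 + c)) (fh * (1 - c)) := by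
    refine csSup_le hne ?_
    rintro _ ⟨t, ⟨ht₁, ht₂⟩, f, ⟨hf₁, -⟩, rfl⟩
    exact Prec_le_Prec hη (by nlinarith) (by nlinarith) (by nlinarith) (by nlinarith)
  have hLB : Prec η (th * (1 - c)) (fh * (1 + c)) ≤ LB th σt fh σf η := by
    refine le_csInf hne ?_
    rintro _ ⟨t, ⟨ht₁, -⟩, f, ⟨hf₁, hf₂⟩, rfl⟩
    exact Prec_le_Prec hη (by nlinarith) (by nlinarith) (by nlinarith) (by nlinarith)
  linarith [Prec_one_add_sub_Prec_one_sub_le hη hth hfh hc₀ hc.le]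

/-- `Δ ≤ max{σ_t/t̂, σ_f/f̂}`. -/
theorem delta_le_max_cv (th fh σt σf : ℝ)
    (hσt : 0 < σt) (hth : σt < th) (hσf : 0 < σf) (hfh : σf < fh) :
    Delta th σt fh σf ≤ max (σt / th) (σf / fh) := by
  have hth₀ : 0 < th := hσt.trans hth
  have hfh₀ : 0 < fh := hσf.trans hfh
  have hc : max (σt / th) (σf / fh) < 1 :=
    max_lt ((div_lt_one hth₀).2 hth) ((div_lt_one hfh₀).2 hfh)
  refine Real.sSup_le ?_ (le_max_of_le_left (by positivity))
  rintro _ ⟨η, hη, rfl⟩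
  exact UB_sub_LB_le hη hth₀ hfh₀ hσt hσf hc
    ((div_le_iff₀ hth₀).1 (le_max_left _ _)) ((div_le_iff₀ hfh₀).1 (le_max_right _ _))
end

section
/- Let t̂, f̂, σ_t, σ_f be real numbers with 0 < σ_t < t̂ and 0 < σ_f < f̂, and let Δ = sup_{η ∈ (0,1)} (UB(η) − LB(η)) be the maximal uncertainty. Then Δ = max{σ_t/t̂, σ_f/f̂} if and only if σ_t/t̂ = σ_f/f̂. -/
open Set

/-! Precision is increasing in the TPR and decreasing in the FPR, so `UB η` and `LB η` are
the values of `Prec η` at opposite corners `(a, b) = (t̂ + σ_t, f̂ - σ_f)` and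
`(c, d) = (t̂ - σ_t, f̂ + σ_f)` of the confidence box. Their difference is
`η (1 - η) (ad - bc)` divided by a product of two denominators which, by AM-GM, is at least
`η (1 - η) (√(ad) + √(bc))²`, with equality for exactly one `η`. Hence
`Δ = (√(ad) - √(bc)) / (√(ad) + √(bc)) = tanh ((artanh CV_TPR + artanh CV_FPR) / 2)`,
and the mean of two reals equals their maximum only when they coincide. -/

open Real

theorem csSup_image_eq_of_mem_closure {X : Type*} [TopologicalSpace X] {g : X → ℝ} {s : Set X}
    {x : X} (hx : x ∈ closure s) (hg : ContinuousWithinAt g s x) (hle : ∀ y ∈ s, g y ≤ g x) :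
    sSup (g '' s) = g x :=
  (isLUB_of_mem_closure (forall_mem_image.2 hle) (hg.mem_closure_image hx)).csSup_eq
    ((closure_nonempty_iff.1 ⟨x, hx⟩).image g)

theorem csInf_image_eq_of_mem_closure {X : Type*} [TopologicalSpace X] {g : X → ℝ} {s : Set X}
    {x : X} (hx : x ∈ closure s) (hg : ContinuousWithinAt g s x) (hle : ∀ y ∈ s, g x ≤ g y) :
    sInf (g '' s) = g x :=
  (isGLB_of_mem_closure (forall_mem_image.2 hle) (hg.mem_closure_image hx)).csInf_eq
    ((closure_nonempty_iff.1 ⟨x, hx⟩).image g)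

theorem setOf_exists_mem_exists_mem_eq_image {α β γ : Type*} (g : α → β → γ) (s : Set α)
    (t : Set β) : {p | ∃ a ∈ s, ∃ b ∈ t, p = g a b} = Function.uncurry g '' s ×ˢ t := by
  rw [image_uncurry_prod]
  ext p
  simp only [mem_ofPred_eq, mem_image2, eq_comm]

theorem closure_Ioo_prod_Ioo {a b c d : ℝ} (hab : a < b) (hcd : c < d) :
    closure (Ioo a b ×ˢ Ioo c d) = Icc a b ×ˢ Icc c d := by
  rw [closure_prod_eq, closure_Ioo hab.ne, closure_Ioo hcd.ne]

theorem Prec_le_Prec_s1 {η t f t' f' : ℝ} (hη : η ∈ Ioo 0 1) (ht : 0 < t) (htt' : t ≤ t')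
    (hf' : 0 < f') (hff' : f' ≤ f) : Prec η t f ≤ Prec η t' f' := by
  obtain ⟨hη0, hη1⟩ := hη
  rw [Prec, Prec, div_le_div_iff₀ (by nlinarith) (by nlinarith)]
  nlinarith [mul_pos hη0 (sub_pos.2 hη1), mul_le_mul htt' hff' hf'.le (ht.le.trans htt')]

theorem continuousAt_uncurry_Prec {η t f : ℝ} (h : η * t + (1 - η) * f ≠ 0) :
    ContinuousAt (Function.uncurry (Prec η)) (t, f) := by
  unfold Function.uncurry Prec
  exact ContinuousAt.div (by fun_prop) (by fun_prop) h

-- With the corners written as squares, the AM-GM bound on the product of the two denominators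
-- becomes a polynomial identity whose defect is the second summand below.
theorem Prec_sq_sub_Prec_sq {η A B C D : ℝ} (hη : η ∈ Ioo 0 1) (hA : 0 < A) (hB : 0 < B)
    (hC : 0 < C) (hD : 0 < D) :
    Prec η (A ^ 2) (B ^ 2) - Prec η (C ^ 2) (D ^ 2) =
      η * (1 - η) * ((A * D - B * C) * (A * D + B * C)) /
        (η * (1 - η) * (A * D + B * C) ^ 2 + (η * A * C - (1 - η) * B * D) ^ 2) := by
  obtain ⟨hη0, hη1⟩ := hη
  have h1η : 0 < 1 - η := sub_pos.2 hη1
  rw [Prec, Prec, div_sub_div _ _ (by positivity) (by positivity)]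
  congr 1 <;> ring

theorem isGreatest_Prec_sq_sub_Prec_sq {A B C D : ℝ} (hA : 0 < A) (hB : 0 < B) (hC : 0 < C)
    (hD : 0 < D) (hBC : B * C ≤ A * D) :
    IsGreatest {x | ∃ η ∈ Ioo 0 1, x = Prec η (A ^ 2) (B ^ 2) - Prec η (C ^ 2) (D ^ 2)}
      ((A * D - B * C) / (A * D + B * C)) := by
  have hS : 0 < A * D + B * C := by positivity
  have hcancel : ∀ η ∈ Ioo (0 : ℝ) 1, η * (1 - η) * ((A * D - B * C) * (A * D + B * C)) /
      (η * (1 - η) * (A * D + B * C) ^ 2) = (A * D - B * C) / (A * D + B * C) := by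
    rintro η ⟨hη0, hη1⟩
    have : 0 < 1 - η := sub_pos.2 hη1
    field_simp
  constructor
  · set η := B * D / (A * C + B * D)
    have hη : η ∈ Ioo 0 1 :=
      ⟨by positivity, (div_lt_one (by positivity)).2 (by linarith [mul_pos hA hC])⟩
    have hbalance : η * A * C - (1 - η) * B * D = 0 := by
      simp only [η]
      field_simp
      ring
    refine ⟨η, hη, ?_⟩
    rw [Prec_sq_sub_Prec_sq hη hA hB hC hD, hbalance, zero_pow two_ne_zero, add_zero, hcancel η hη]
  · rintro x ⟨η, hη, rfl⟩
    rw [Prec_sq_sub_Prec_sq hη hA hB hC hD, ← hcancel η hη]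
    have hηη : 0 < η * (1 - η) := mul_pos hη.1 (sub_pos.2 hη.2)
    exact div_le_div_of_nonneg_left (mul_nonneg hηη.le (mul_nonneg (sub_nonneg.2 hBC) hS.le))
      (by positivity) (le_add_of_nonneg_right (sq_nonneg _))

theorem tanh_div_two (s : ℝ) : tanh (s / 2) = (exp s - 1) / (exp s + 1) := by
  have hsq : exp s = exp (s / 2) ^ 2 := by rw [sq, ← exp_add, add_halves]
  have hpos := exp_pos (s / 2)
  rw [hsq, tanh_eq, exp_neg]
  field_simp

theorem div_mem_Ioo_neg_one_one {σ θ : ℝ} (hσ : 0 < σ) (hσθ : σ < θ) : σ / θ ∈ Ioo (-1) 1 :=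
  ⟨by linarith [div_pos hσ (hσ.trans hσθ)], (div_lt_one (hσ.trans hσθ)).2 hσθ⟩

theorem sqrt_one_add_div_div_one_sub_div {σ θ : ℝ} (hσ : 0 < σ) (hσθ : σ < θ) :
    √((1 + σ / θ) / (1 - σ / θ)) = √(θ + σ) / √(θ - σ) := by
  have hθ : 0 < θ := hσ.trans hσθ
  rw [← sqrt_div (by linarith)]
  congr 1
  field_simp

theorem add_div_two_eq_max_iff {K : Type*} [Field K] [LinearOrder K] [IsStrictOrderedRing K]
    {x y : K} : (x + y) / 2 = max x y ↔ x = y := by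
  rcases le_total x y with h | h
  · rw [max_eq_right h]
    constructor <;> intro <;> linarith
  · rw [max_eq_left h]
    constructor <;> intro <;> linarith

section Bounds

variable {th σt fh σf η : ℝ}

theorem UB_eq (hσt : 0 < σt) (hth : σt < th) (hσf : 0 < σf) (hfh : σf < fh)
    (hη : η ∈ Ioo 0 1) : UB th σt fh σf η = Prec η (th + σt) (fh - σf) := by
  rw [UB, setOf_exists_mem_exists_mem_eq_image]
  refine csSup_image_eq_of_mem_closure ?_ (continuousAt_uncurry_Prec ?_).continuousWithinAt ?_
  · rw [closure_Ioo_prod_Ioo (by linarith) (by linarith)]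
    exact ⟨right_mem_Icc.2 (by linarith), left_mem_Icc.2 (by linarith)⟩
  · nlinarith [hη.1, hη.2]
  · rintro ⟨t, f⟩ ⟨ht, hf⟩
    exact Prec_le_Prec_s1 hη (by linarith [ht.1]) ht.2.le (by linarith) hf.1.le

theorem LB_eq (hσt : 0 < σt) (hth : σt < th) (hσf : 0 < σf) (hfh : σf < fh)
    (hη : η ∈ Ioo 0 1) : LB th σt fh σf η = Prec η (th - σt) (fh + σf) := by
  rw [LB, setOf_exists_mem_exists_mem_eq_image]
  refine csInf_image_eq_of_mem_closure ?_ (continuousAt_uncurry_Prec ?_).continuousWithinAt ?_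
  · rw [closure_Ioo_prod_Ioo (by linarith) (by linarith)]
    exact ⟨left_mem_Icc.2 (by linarith), right_mem_Icc.2 (by linarith)⟩
  · nlinarith [hη.1, hη.2]
  · rintro ⟨t, f⟩ ⟨ht, hf⟩
    exact Prec_le_Prec_s1 hη (by linarith) ht.1.le (by linarith [hf.1]) hf.2.le

theorem Delta_eq (hσt : 0 < σt) (hth : σt < th) (hσf : 0 < σf) (hfh : σf < fh) :
    Delta th σt fh σf =
      (√(th + σt) * √(fh + σf) - √(fh - σf) * √(th - σt)) /
        (√(th + σt) * √(fh + σf) + √(fh - σf) * √(th - σt)) := by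
  have hgreatest := isGreatest_Prec_sq_sub_Prec_sq (A := √(th + σt)) (B := √(fh - σf))
    (C := √(th - σt)) (D := √(fh + σf)) (sqrt_pos.2 (by linarith)) (sqrt_pos.2 (by linarith))
    (sqrt_pos.2 (by linarith)) (sqrt_pos.2 (by linarith)) ?_
  · rw [Delta, ← hgreatest.csSup_eq]
    congr 1
    ext x
    refine exists_congr fun η => and_congr_right fun hη => ?_
    rw [UB_eq hσt hth hσf hfh hη, LB_eq hσt hth hσf hfh hη, sq_sqrt (by linarith),
      sq_sqrt (by linarith), sq_sqrt (by linarith), sq_sqrt (by linarith)]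
  · rw [← sqrt_mul (by linarith), ← sqrt_mul (by linarith)]
    exact sqrt_le_sqrt (by nlinarith)

theorem Delta_eq_tanh_mean_artanh (hσt : 0 < σt) (hth : σt < th) (hσf : 0 < σf)
    (hfh : σf < fh) :
    Delta th σt fh σf = tanh ((artanh (σt / th) + artanh (σf / fh)) / 2) := by
  have hu := div_mem_Ioo_neg_one_one hσt hth
  have hv := div_mem_Ioo_neg_one_one hσf hfh
  have := sqrt_pos.2 (sub_pos.2 hth)
  have := sqrt_pos.2 (sub_pos.2 hfh)
  rw [Delta_eq hσt hth hσf hfh, tanh_div_two, exp_add, exp_artanh hu, exp_artanh hv,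
    sqrt_one_add_div_div_one_sub_div hσt hth, sqrt_one_add_div_div_one_sub_div hσf hfh]
  field_simp

end Bounds

/-- `Δ = max{σ_t/t̂, σ_f/f̂}` iff `σ_t/t̂ = σ_f/f̂`. -/
theorem delta_eq_max_cv_iff (th fh σt σf : ℝ)
    (hσt : 0 < σt) (hth : σt < th) (hσf : 0 < σf) (hfh : σf < fh) :
    Delta th σt fh σf = max (σt / th) (σf / fh) ↔ σt / th = σf / fh := by
  have hu := div_mem_Ioo_neg_one_one hσt hth
  have hv := div_mem_Ioo_neg_one_one hσf hfh
  rw [Delta_eq_tanh_mean_artanh hσt hth hσf hfh, ← tanh_artanh (max_rec' _ hu hv),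
    tanh_injective.eq_iff, strictMonoOn_artanh.monotoneOn.map_max hu hv, add_div_two_eq_max_iff,
    artanh_injOn.eq_iff hu hv]
end

section
/- Let r₁, r₂ be reals with 0 < r₁ < r₂, and define f : (0,∞) → ℝ by f(x) = 1/(1 + x·r₁) − 1/(1 + x·r₂). Then f attains its maximum over (0,∞) at the unique point x* = 1/√(r₁·r₂); that is, f(x) ≤ f(x*) for all x > 0, with equality only at x = x*. -/
/-! The difference `1/(1 + x r₁) - 1/(1 + x r₂)` equals `(r₂ - r₁)/(x⁻¹ + r₁ + r₂ + x r₁ r₂)`,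
and by AM-GM the denominator is `r₁ + r₂ + 2√(r₁ r₂) + (x√(r₁ r₂) - 1)²/x`, which is minimal
exactly when `x √(r₁ r₂) = 1`. -/

open Real

lemma inv_add_mul_sq_eq {x : ℝ} (hx : x ≠ 0) (s : ℝ) :
    x⁻¹ + x * s ^ 2 = 2 * s + (x * s - 1) ^ 2 / x := by
  field_simp
  ring

lemma one_div_one_add_mul_sub_one_div_one_add_mul {x : ℝ} (hx : 0 < x) {a b : ℝ}
    (ha : 0 ≤ a) (hb : 0 ≤ b) :
    1 / (1 + x * a) - 1 / (1 + x * b) =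
      (b - a) / (a + b + 2 * √(a * b) + (x * √(a * b) - 1) ^ 2 / x) := by
  have hsq := inv_add_mul_sq_eq hx.ne' √(a * b)
  rw [sq_sqrt (mul_nonneg ha hb)] at hsq
  have hxa : 1 + x * a ≠ 0 := by positivity
  have hxb : 1 + x * b ≠ 0 := by positivity
  calc 1 / (1 + x * a) - 1 / (1 + x * b) = (b - a) / (x⁻¹ + (a + b) + x * (a * b)) := by
        field_simp
        ring
    _ = _ := by congr 1; linarith

/-- `f(x) = 1/(1 + x r₁) - 1/(1 + x r₂)` attains its maximum over `(0, ∞)`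
at the unique point `x* = 1/√(r₁ r₂)`. -/
theorem bandwidth_max_at (r₁ r₂ : ℝ) (hr₁ : 0 < r₁) (hr₁₂ : r₁ < r₂)
    (f : ℝ → ℝ) (hf : ∀ x, f x = 1 / (1 + x * r₁) - 1 / (1 + x * r₂)) :
    (∀ x : ℝ, 0 < x → f x ≤ f (1 / Real.sqrt (r₁ * r₂))) ∧
    (∀ x : ℝ, 0 < x → f x = f (1 / Real.sqrt (r₁ * r₂)) → x = 1 / Real.sqrt (r₁ * r₂)) := by
  have hr₂ : 0 < r₂ := hr₁.trans hr₁₂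
  set s := √(r₁ * r₂)
  have hs : 0 < s := sqrt_pos.2 (mul_pos hr₁ hr₂)
  have hf' (x : ℝ) (hx : 0 < x) :
      f x = (r₂ - r₁) / (r₁ + r₂ + 2 * s + (x * s - 1) ^ 2 / x) :=
    (hf x).trans (one_div_one_add_mul_sub_one_div_one_add_mul hx hr₁.le hr₂.le)
  have hmax : f (1 / s) = (r₂ - r₁) / (r₁ + r₂ + 2 * s) := by
    rw [hf' _ (by positivity), one_div_mul_cancel hs.ne', sub_self]
    simp
  refine ⟨fun x hx => ?_, fun x hx heq => ?_⟩
  · rw [hf' x hx, hmax]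
    exact div_le_div_of_nonneg_left (sub_pos.2 hr₁₂).le (by positivity)
      (le_add_of_nonneg_right (by positivity))
  · rw [hf' x hx, hmax, div_eq_mul_inv (r₂ - r₁), div_eq_mul_inv (r₂ - r₁)] at heq
    have hden := inv_inj.1 (mul_left_cancel₀ (sub_pos.2 hr₁₂).ne' heq)
    rw [add_eq_left, div_eq_zero_iff, or_iff_left hx.ne', sq_eq_zero_iff, sub_eq_zero] at hden
    exact eq_one_div_of_mul_eq_one_left hden
end

section
/- Let r₁, r₂ be reals with 0 < r₁ < r₂, and define f : (0,∞) → ℝ by f(x) = 1/(1 + x·r₁) − 1/(1 + x·r₂). Then the supremum of f over (0,∞) equals (1 − √(r₁/r₂)) / (1 + √(r₁/r₂)), attained at x* = 1/√(r₁·r₂). -/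
/-! Write `r₁ = a²`, `r₂ = b²` with `0 < a < b`. The gap between `(b - a) / (b + a)` and
`f x` is `(b - a) (x a b - 1)² / ((b + a) (1 + x a²) (1 + x b²))`, which is nonnegative for
`x > 0` and vanishes exactly at `x = 1 / (a b) = 1 / √(r₁ r₂)`. -/

namespace Bandwidth

variable {a b x : ℝ}

theorem sub_one_div_sub_one_div_eq (ha : 1 + x * a ^ 2 ≠ 0) (hb : 1 + x * b ^ 2 ≠ 0)
    (hab : b + a ≠ 0) :
    (b - a) / (b + a) - (1 / (1 + x * a ^ 2) - 1 / (1 + x * b ^ 2)) =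
      (b - a) * (x * a * b - 1) ^ 2 / ((b + a) * (1 + x * a ^ 2) * (1 + x * b ^ 2)) := by
  rw [div_sub_div _ _ ha hb, div_sub_div _ _ hab (mul_ne_zero ha hb),
    div_eq_div_iff (mul_ne_zero hab (mul_ne_zero ha hb)) (mul_ne_zero (mul_ne_zero hab ha) hb)]
  ring

theorem one_div_sub_one_div_le (ha : 0 ≤ a) (hab : a ≤ b) (hb : 0 < b) (hx : 0 ≤ x) :
    1 / (1 + x * a ^ 2) - 1 / (1 + x * b ^ 2) ≤ (b - a) / (b + a) := by
  have hgap := sub_one_div_sub_one_div_eq (a := a) (b := b) (x := x)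
    (by positivity) (by positivity) (by positivity)
  have : 0 ≤ (b - a) * (x * a * b - 1) ^ 2 / ((b + a) * (1 + x * a ^ 2) * (1 + x * b ^ 2)) :=
    div_nonneg (mul_nonneg (sub_nonneg.2 hab) (sq_nonneg _)) (by positivity)
  linarith

theorem one_div_sub_one_div_at_inv_mul (ha : 0 < a) (hb : 0 < b) :
    1 / (1 + 1 / (a * b) * a ^ 2) - 1 / (1 + 1 / (a * b) * b ^ 2) = (b - a) / (b + a) := by
  have hgap := sub_one_div_sub_one_div_eq (a := a) (b := b) (x := 1 / (a * b))
    (by positivity) (by positivity) (by positivity)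
  have hcrit : 1 / (a * b) * a * b - 1 = 0 := by field_simp; ring
  rw [hcrit, zero_pow two_ne_zero, mul_zero, zero_div, sub_eq_zero] at hgap
  exact hgap.symm

theorem isGreatest_one_div_sub_one_div (ha : 0 < a) (hab : a ≤ b) :
    IsGreatest {y : ℝ | ∃ x : ℝ, 0 < x ∧ y = 1 / (1 + x * a ^ 2) - 1 / (1 + x * b ^ 2)}
      ((b - a) / (b + a)) := by
  have hb : 0 < b := ha.trans_le hab
  refine ⟨⟨1 / (a * b), by positivity, (one_div_sub_one_div_at_inv_mul ha hb).symm⟩, ?_⟩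
  rintro y ⟨x, hx, rfl⟩
  exact one_div_sub_one_div_le ha.le hab hb hx.le

end Bandwidth

/-- the supremum of `f(x) = 1/(1 + x r₁) - 1/(1 + x r₂)` over `(0, ∞)`
equals `(1 - √(r₁/r₂)) / (1 + √(r₁/r₂))`, attained at `x* = 1/√(r₁ r₂)`. -/
theorem bandwidth_sup_eq (r₁ r₂ : ℝ) (hr₁ : 0 < r₁) (hr₁₂ : r₁ < r₂)
    (f : ℝ → ℝ) (hf : ∀ x, f x = 1 / (1 + x * r₁) - 1 / (1 + x * r₂)) :
    sSup {y : ℝ | ∃ x : ℝ, 0 < x ∧ y = f x} =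
        (1 - Real.sqrt (r₁ / r₂)) / (1 + Real.sqrt (r₁ / r₂)) ∧
    f (1 / Real.sqrt (r₁ * r₂)) =
        (1 - Real.sqrt (r₁ / r₂)) / (1 + Real.sqrt (r₁ / r₂)) := by
  have hr₂ : 0 < r₂ := hr₁.trans hr₁₂
  obtain ⟨a, ha, rfl⟩ : ∃ a, 0 < a ∧ a ^ 2 = r₁ := ⟨_, Real.sqrt_pos.2 hr₁, Real.sq_sqrt hr₁.le⟩
  obtain ⟨b, hb, rfl⟩ : ∃ b, 0 < b ∧ b ^ 2 = r₂ := ⟨_, Real.sqrt_pos.2 hr₂, Real.sq_sqrt hr₂.le⟩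
  have hab : a ≤ b := (pow_le_pow_iff_left₀ ha.le hb.le two_ne_zero).1 hr₁₂.le
  have hratio : (1 - √(a ^ 2 / b ^ 2)) / (1 + √(a ^ 2 / b ^ 2)) = (b - a) / (b + a) := by
    rw [← div_pow, Real.sqrt_sq (by positivity)]
    field_simp
  rw [hratio, ← mul_pow, Real.sqrt_sq (by positivity)]
  simp only [hf]
  exact ⟨(Bandwidth.isGreatest_one_div_sub_one_div ha hab).csSup_eq,
    Bandwidth.one_div_sub_one_div_at_inv_mul ha hb⟩
end

section
/- Let (Ω, 𝒜, P) be a probability space and let X, Y : Ω → ℝ be independent random variables. Let t̂, f̂, σ_t, σ_f be reals with 0 < σ_t < t̂ and 0 < σ_f < f̂, let α ∈ (0,1), and suppose P(X ∈ (t̂ − σ_t, t̂ + σ_t)) ≥ α and P(Y ∈ (f̂ − σ_f, f̂ + σ_f)) ≥ α. Set Δ = max{σ_t/t̂, σ_f/f̂}. Then for every η ∈ (0,1), P(|Prec(η, X, Y) − Prec(η, t̂, f̂)| ≤ Δ) ≥ α². -/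
/-!
Write `Prec η t f = a / (a + b)` with `a = η t` and `b = (1 - η) f`. If `a'`, `b'` are
perturbations of `a`, `b` with relative errors at most `Δ`, then
`a' b - a b' = a' (b - b') + b' (a' - a)` is bounded by `Δ (a' b + a b') ≤ Δ (a' + b') (a + b)`,
so `a' / (a' + b')` is within `Δ` of `a / (a + b)`. On the event that `X` and `Y` both lie in
their confidence intervals, the relative errors of `X` and `Y` are below `Δ`, and by
independence this event has probability at least `α²`.
-/

open MeasureTheory

theorem abs_div_add_sub_div_add_le {a b a' b' Δ : ℝ} (ha : 0 < a) (hb : 0 < b)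
    (ha' : 0 < a') (hb' : 0 < b') (hΔa : |a' - a| ≤ Δ * a) (hΔb : |b' - b| ≤ Δ * b) :
    |a' / (a' + b') - a / (a + b)| ≤ Δ := by
  have hΔ : 0 ≤ Δ := nonneg_of_mul_nonneg_left ((abs_nonneg _).trans hΔa) ha
  have hnum : |a' * b - a * b'| ≤ Δ * ((a' + b') * (a + b)) :=
    calc |a' * b - a * b'| = |a' * (b - b') + b' * (a' - a)| := by ring_nf
      _ ≤ a' * |b' - b| + b' * |a' - a| := by
          rw [abs_sub_comm b' b]
          simpa only [abs_mul, abs_of_pos ha', abs_of_pos hb'] using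
            abs_add_le (a' * (b - b')) (b' * (a' - a))
      _ ≤ a' * (Δ * b) + b' * (Δ * a) := by gcongr
      _ ≤ Δ * ((a' + b') * (a + b)) := by nlinarith [mul_pos ha ha', mul_pos hb hb']
  have hden : 0 < (a' + b') * (a + b) := by positivity
  have hdiff : a' / (a' + b') - a / (a + b) = (a' * b - a * b') / ((a' + b') * (a + b)) := by
    field_simp
    ring
  rwa [hdiff, abs_div, abs_of_pos hden, div_le_iff₀ hden]

theorem abs_prec_sub_prec_le {η t f t₀ f₀ Δ : ℝ} (hη : η ∈ Set.Ioo (0 : ℝ) 1)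
    (ht : 0 < t) (hf : 0 < f) (ht₀ : 0 < t₀) (hf₀ : 0 < f₀)
    (hΔt : |t - t₀| ≤ Δ * t₀) (hΔf : |f - f₀| ≤ Δ * f₀) :
    |Prec η t f - Prec η t₀ f₀| ≤ Δ := by
  obtain ⟨hη₀, hη₁⟩ := hη
  have hη₁' : 0 < 1 - η := sub_pos.mpr hη₁
  refine abs_div_add_sub_div_add_le (by positivity) (by positivity) (by positivity)
    (by positivity) ?_ ?_
  · rw [← mul_sub, abs_mul, abs_of_pos hη₀, mul_left_comm]
    exact mul_le_mul_of_nonneg_left hΔt hη₀.le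
  · rw [← mul_sub, abs_mul, abs_of_pos hη₁', mul_left_comm]
    exact mul_le_mul_of_nonneg_left hΔf hη₁'.le

theorem abs_sub_le_of_mem_Ioo {x x₀ σ Δ : ℝ} (hx₀ : 0 < x₀) (hσ : σ / x₀ ≤ Δ)
    (hx : x ∈ Set.Ioo (x₀ - σ) (x₀ + σ)) : |x - x₀| ≤ Δ * x₀ := by
  rw [div_le_iff₀ hx₀] at hσ
  exact abs_sub_le_iff.mpr ⟨by linarith [hx.2], by linarith [hx.1]⟩

theorem ProbabilityTheory.IndepFun.ofReal_mul_le_measure_inter_preimage {Ω : Type*}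
    [MeasurableSpace Ω] {P : Measure Ω} {X Y : Ω → ℝ} (hXY : IndepFun X Y P)
    {s t : Set ℝ} (hs : MeasurableSet s) (ht : MeasurableSet t) {α β : ℝ} (hα : 0 ≤ α)
    (hXs : ENNReal.ofReal α ≤ P (X ⁻¹' s)) (hYt : ENNReal.ofReal β ≤ P (Y ⁻¹' t)) :
    ENNReal.ofReal (α * β) ≤ P (X ⁻¹' s ∩ Y ⁻¹' t) := by
  rw [ENNReal.ofReal_mul hα, hXY.measure_inter_preimage_eq_mul s t hs ht]
  exact mul_le_mul' hXs hYt

theorem prec_confidence_general {Ω : Type*} [MeasurableSpace Ω]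
    (P : Measure Ω)
    (X Y : Ω → ℝ)
    (hindep : ProbabilityTheory.IndepFun X Y P)
    (th fh σt σf α : ℝ)
    (hσt : 0 < σt) (hth : σt < th) (hσf : 0 < σf) (hfh : σf < fh)
    (hα : α ∈ Set.Ioo (0:ℝ) 1)
    (hXconf : ENNReal.ofReal α ≤ P {ω | X ω ∈ Set.Ioo (th - σt) (th + σt)})
    (hYconf : ENNReal.ofReal α ≤ P {ω | Y ω ∈ Set.Ioo (fh - σf) (fh + σf)}) :
    ∀ η ∈ Set.Ioo (0:ℝ) 1,
      ENNReal.ofReal (α ^ 2) ≤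
        P {ω | |Prec η (X ω) (Y ω) - Prec η th fh| ≤ max (σt / th) (σf / fh)} := by
  intro η hη
  have hth₀ : 0 < th := hσt.trans hth
  have hfh₀ : 0 < fh := hσf.trans hfh
  have hboth : X ⁻¹' Set.Ioo (th - σt) (th + σt) ∩ Y ⁻¹' Set.Ioo (fh - σf) (fh + σf) ⊆
      {ω | |Prec η (X ω) (Y ω) - Prec η th fh| ≤ max (σt / th) (σf / fh)} := by
    rintro ω ⟨hXω, hYω⟩
    exact abs_prec_sub_prec_le hη (by linarith [hXω.1]) (by linarith [hYω.1]) hth₀ hfh₀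
      (abs_sub_le_of_mem_Ioo hth₀ (le_max_left _ _) hXω)
      (abs_sub_le_of_mem_Ioo hfh₀ (le_max_right _ _) hYω)
  calc ENNReal.ofReal (α ^ 2)
      ≤ P (X ⁻¹' Set.Ioo (th - σt) (th + σt) ∩ Y ⁻¹' Set.Ioo (fh - σf) (fh + σf)) := by
        rw [sq]
        exact hindep.ofReal_mul_le_measure_inter_preimage measurableSet_Ioo measurableSet_Ioo
          hα.1.le hXconf hYconf
    _ ≤ _ := measure_mono hboth

/-- if the estimates of TPR and FPR lie in their confidence intervals
with probability at least `α` each, and the estimating random variables are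
independent, then the precision lies within `Δ = max{CV_TPR, CV_FPR}` of its point
estimate with probability at least `α²`. -/
theorem prec_confidence {Ω : Type*} [MeasurableSpace Ω]
    (P : Measure Ω) [IsProbabilityMeasure P]
    (X Y : Ω → ℝ) (hX : Measurable X) (hY : Measurable Y)
    (hindep : ProbabilityTheory.IndepFun X Y P)
    (th fh σt σf α : ℝ)
    (hσt : 0 < σt) (hth : σt < th) (hσf : 0 < σf) (hfh : σf < fh)
    (hα : α ∈ Set.Ioo (0:ℝ) 1)
    (hXconf : ENNReal.ofReal α ≤ P {ω | X ω ∈ Set.Ioo (th - σt) (th + σt)})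
    (hYconf : ENNReal.ofReal α ≤ P {ω | Y ω ∈ Set.Ioo (fh - σf) (fh + σf)}) :
    ∀ η ∈ Set.Ioo (0:ℝ) 1,
      ENNReal.ofReal (α ^ 2) ≤
        P {ω | |Prec η (X ω) (Y ω) - Prec η th fh| ≤ max (σt / th) (σf / fh)} :=
  prec_confidence_general P X Y hindep th fh σt σf α hσt hth hσf hfh hα hXconf hYconf
end
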